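/- Let D > 0 and let (u, v) ∈ ℝ² with u² + v² = 1. Define b_h(ξ_x, ξ_y) = (8/9)·[cos(2π√3·D·ξ_x) + cos(2πD·((√3/2)·ξ_x + (3/2)·ξ_y)) + cos(2πD·((√3/2)·ξ_x − (3/2)·ξ_y))] − 2/3. Then the dispersion ratio of the hexagonal waveguide mesh along the direction (u, v) tends to 1/√2 at dc: the function t ↦ (1/(4πD·t))·arctan(√(4 − b_h(t·u, t·v)²)/b_h(t·u, t·v)) tends to 1/√2 as t → 0⁺. -/

import Mathlib

/-!
Along a ray `t ↦ (t u, t v)` the mesh coefficient satisfies `2 - b_h = 8 π² D² t² + o(t²)`: each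
cosine contributes `1 - cos (a t) ~ a² t² / 2`, and the three squared frequencies add up to
`(9/2) (2 π D)² (u² + v²)`. For any coefficient with `2 - b ~ c t²`, the argument of the arctangent
behaves like `√((2 - b)(2 + b)) / b ~ √c · t`, so `arctan (…) / t → √c`, and dividing by `4 π D`
turns `√(8 π² D²) = 2√2 π D` into `1/√2`.
-/

open Real Filter Topology

noncomputable def hexagonalMeshCoeff (D ξx ξy : ℝ) : ℝ :=
  8 / 9 * (cos (2 * π * √3 * D * ξx) + cos (2 * π * D * (√3 / 2 * ξx + 3 / 2 * ξy)) +
    cos (2 * π * D * (√3 / 2 * ξx - 3 / 2 * ξy))) - 2 / 3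

lemma one_sub_cos_mul_div_sq (a : ℝ) {t : ℝ} (ht : t ≠ 0) :
    (1 - cos (a * t)) / t ^ 2 = a ^ 2 / 2 * sinc (a * t / 2) ^ 2 := by
  rcases eq_or_ne a 0 with rfl | ha
  · simp
  have hcos : cos (a * t) = 1 - 2 * sin (a * t / 2) ^ 2 := by
    have h := cos_two_mul' (a * t / 2)
    rw [mul_div_cancel₀ _ two_ne_zero] at h
    linear_combination h + sin_sq_add_cos_sq (a * t / 2)
  rw [sinc_of_ne_zero (by positivity), hcos]
  field_simp
  ring

lemma tendsto_one_sub_cos_mul_div_sq (a : ℝ) :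
    Tendsto (fun t => (1 - cos (a * t)) / t ^ 2) (𝓝[≠] 0) (𝓝 (a ^ 2 / 2)) := by
  have hcont : Continuous fun t => a ^ 2 / 2 * sinc (a * t / 2) ^ 2 := by fun_prop
  have hlim := hcont.tendsto 0
  simp only [mul_zero, zero_div, sinc_zero, one_pow, mul_one] at hlim
  refine (hlim.mono_left nhdsWithin_le_nhds).congr' ?_
  filter_upwards [self_mem_nhdsWithin] with t ht
  exact (one_sub_cos_mul_div_sq a ht).symm

lemma tendsto_arctan_div_self : Tendsto (fun x => arctan x / x) (𝓝[≠] 0) (𝓝 1) := by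
  simpa [div_eq_inv_mul] using (hasDerivAt_arctan 0).tendsto_slope_zero

lemma tendsto_arctan_div_of_tendsto_div {α : Type*} {l : Filter α} {y g : α → ℝ} {L : ℝ}
    (hy : Tendsto y l (𝓝[≠] 0)) (h : Tendsto (fun x => y x / g x) l (𝓝 L)) :
    Tendsto (fun x => arctan (y x) / g x) l (𝓝 L) := by
  have hprod := (tendsto_arctan_div_self.comp hy).mul h
  rw [one_mul] at hprod
  refine hprod.congr' ?_
  filter_upwards [hy self_mem_nhdsWithin] with x hx
  exact div_mul_div_cancel₀ hx

theorem tendsto_arctan_sqrt_four_sub_sq_div_div {b : ℝ → ℝ} {c : ℝ} (hc : 0 < c)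
    (hb : Tendsto (fun t => (2 - b t) / t ^ 2) (𝓝[>] 0) (𝓝 c)) :
    Tendsto (fun t => arctan (√(4 - b t ^ 2) / b t) / t) (𝓝[>] 0) (𝓝 √c) := by
  have ht_pos : ∀ᶠ t in 𝓝[>] (0 : ℝ), 0 < t := self_mem_nhdsWithin
  have ht_lim : Tendsto (fun t : ℝ => t) (𝓝[>] 0) (𝓝 0) :=
    tendsto_nhdsWithin_of_tendsto_nhds tendsto_id
  have hb_lim : Tendsto b (𝓝[>] 0) (𝓝 2) := by
    have h := tendsto_const_nhds (x := (2 : ℝ)).sub (hb.mul (ht_lim.pow 2))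
    rw [zero_pow two_ne_zero, mul_zero, sub_zero] at h
    refine h.congr' ?_
    filter_upwards [ht_pos] with t ht
    rw [div_mul_cancel₀ _ (by positivity), sub_sub_cancel]
  have hb_lt : ∀ᶠ t in 𝓝[>] (0 : ℝ), b t < 2 := by
    filter_upwards [hb.eventually (eventually_gt_nhds hc), ht_pos] with t hq ht
    exact sub_pos.1 ((div_pos_iff_of_pos_right (by positivity)).1 hq)
  have hb_pos : ∀ᶠ t in 𝓝[>] (0 : ℝ), 0 < b t := hb_lim.eventually (eventually_gt_nhds two_pos)
  have hratio : Tendsto (fun t => √(4 - b t ^ 2) / b t / t) (𝓝[>] 0) (𝓝 √c) := by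
    have h := ((hb.mul (hb_lim.const_add 2)).sqrt).div hb_lim two_ne_zero
    rw [show c * (2 + 2) = 2 ^ 2 * c by ring, sqrt_mul' _ hc.le, sqrt_sq zero_le_two,
      mul_div_cancel_left₀ _ two_ne_zero] at h
    refine h.congr' ?_
    filter_upwards [ht_pos] with t ht
    simp only [Pi.div_apply]
    rw [div_mul_eq_mul_div, show (2 - b t) * (2 + b t) = 4 - b t ^ 2 by ring,
      sqrt_div' _ (sq_nonneg t), sqrt_sq ht.le, div_right_comm]
  have hy : Tendsto (fun t => √(4 - b t ^ 2) / b t) (𝓝[>] 0) (𝓝[≠] 0) := by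
    refine tendsto_nhdsWithin_iff.2 ⟨?_, ?_⟩
    · have h := hratio.mul ht_lim
      rw [mul_zero] at h
      refine h.congr' ?_
      filter_upwards [ht_pos] with t ht
      exact div_mul_cancel₀ _ ht.ne'
    · filter_upwards [hb_pos, hb_lt] with t h0 h2
      exact (div_pos (sqrt_pos.2 (by nlinarith)) h0).ne'
  exact tendsto_arctan_div_of_tendsto_div hy hratio

theorem tendsto_two_sub_hexagonalMeshCoeff_div_sq (D : ℝ) {u v : ℝ} (huv : u ^ 2 + v ^ 2 = 1) :
    Tendsto (fun t => (2 - hexagonalMeshCoeff D (t * u) (t * v)) / t ^ 2) (𝓝[≠] 0)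
      (𝓝 (8 * π ^ 2 * D ^ 2)) := by
  set a₁ := 2 * π * √3 * D * u
  set a₂ := 2 * π * D * (√3 / 2 * u + 3 / 2 * v)
  set a₃ := 2 * π * D * (√3 / 2 * u - 3 / 2 * v)
  have hsum := (((tendsto_one_sub_cos_mul_div_sq a₁).add (tendsto_one_sub_cos_mul_div_sq a₂)).add
    (tendsto_one_sub_cos_mul_div_sq a₃)).const_mul (8 / 9)
  have hval : 8 / 9 * (a₁ ^ 2 / 2 + a₂ ^ 2 / 2 + a₃ ^ 2 / 2) = 8 * π ^ 2 * D ^ 2 := by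
    have h3 : √3 ^ 2 = 3 := sq_sqrt (by norm_num)
    linear_combination (8 / 3 * π ^ 2 * D ^ 2 * u ^ 2) * h3 + (8 * π ^ 2 * D ^ 2) * huv
  rw [hval] at hsum
  refine hsum.congr fun t => ?_
  simp only [hexagonalMeshCoeff, a₁, a₂, a₃]
  ring_nf

/-- The dispersion ratio of the hexagonal waveguide mesh (for which `α_h = 2`) along any
unit direction `(u, v)` tends to `1/√2` at dc. -/
theorem stmt8 (D u v : ℝ) (hD : 0 < D) (huv : u ^ 2 + v ^ 2 = 1)
    (b : ℝ → ℝ → ℝ)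
    (hb : ∀ ξx ξy, b ξx ξy = (8 / 9) * (Real.cos (2 * π * Real.sqrt 3 * D * ξx) +
      Real.cos (2 * π * D * (Real.sqrt 3 / 2 * ξx + 3 / 2 * ξy)) +
      Real.cos (2 * π * D * (Real.sqrt 3 / 2 * ξx - 3 / 2 * ξy))) - 2 / 3) :
    Filter.Tendsto (fun t : ℝ => (1 / (4 * π * D * t)) *
        Real.arctan (Real.sqrt (4 - (b (t * u) (t * v)) ^ 2) / b (t * u) (t * v)))
      (nhdsWithin 0 (Set.Ioi 0)) (nhds (1 / Real.sqrt 2)) := by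
  obtain rfl : b = hexagonalMeshCoeff D := funext fun ξx => funext (hb ξx)
  have hdisp := tendsto_arctan_sqrt_four_sub_sq_div_div (by positivity)
    ((tendsto_two_sub_hexagonalMeshCoeff_div_sq D huv).mono_left (nhdsGT_le_nhdsNE 0))
  have hval : 1 / (4 * π * D) * √(8 * π ^ 2 * D ^ 2) = 1 / √2 := by
    have h2 : √2 ^ 2 = 2 := sq_sqrt zero_le_two
    rw [show 8 * π ^ 2 * D ^ 2 = 2 * (2 * π * D) ^ 2 by ring, sqrt_mul' _ (sq_nonneg _),
      sqrt_sq (by positivity)]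
    field_simp
    linear_combination 2 * h2
  rw [← hval]
  refine (hdisp.const_mul _).congr fun t => ?_
  ring
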